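/- Let F be a k-uniform odd-sunflower-free antichain of subsets of an n-element set, and suppose there exists an odd-sunflower-free antichain of nonempty subsets of an m-element set with b members. Then there exists an odd-sunflower-free antichain of nonempty subsets of an (n·m)-element set with |F|·b^k members. In particular, for every odd n ≥ 3, there exists an odd-sunflower-free antichain of nonempty subsets of an (n·m)-element set with n·b^{n−1} members. -/

import Mathlib

variable {α : Type*}

/-- A family of at least two nonempty finite sets is an *odd-sunflower* if every element of
the union of its members is contained in an odd number of its members. -/
def IsOddSunflower [DecidableEq α] (F : Finset (Finset α)) : Prop :=
  2 ≤ F.card ∧ (∀ S ∈ F, S.Nonempty) ∧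
    ∀ x ∈ F.sup id, Odd (F.filter (fun S => x ∈ S)).card

/-- A family is *odd-sunflower-free* if no subfamily of it (necessarily with at least two
members) is an odd-sunflower. -/
def OddSunflowerFree [DecidableEq α] (F : Finset (Finset α)) : Prop :=
  ∀ H ⊆ F, ¬ IsOddSunflower H

/-- A nonempty family of nonempty finite sets is an *even-sunflower* if every element of
the union of its members is contained in an even number of its members. -/
def IsEvenSunflower [DecidableEq α] (F : Finset (Finset α)) : Prop :=
  F.Nonempty ∧ (∀ S ∈ F, S.Nonempty) ∧
    ∀ x ∈ F.sup id, Even (F.filter (fun S => x ∈ S)).card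

/-- A family is *even-sunflower-free* if no nonempty subfamily of it is an even-sunflower. -/
def EvenSunflowerFree [DecidableEq α] (F : Finset (Finset α)) : Prop :=
  ∀ H ⊆ F, ¬ IsEvenSunflower H

/-- A family of at least three sets is a *sunflower* if every element is contained either
in all of the sets or in at most one of them. -/
def IsSunflower [DecidableEq α] (H : Finset (Finset α)) : Prop :=
  3 ≤ H.card ∧ ∀ x : α, (∀ S ∈ H, x ∈ S) ∨ (H.filter (fun S => x ∈ S)).card ≤ 1

/-- A family of sets is an *antichain* if none of its members is a proper subset of another. -/
def IsAntichainFamily (F : Finset (Finset α)) : Prop :=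
  ∀ S ∈ F, ∀ T ∈ F, S ⊆ T → S = T

/-- An odd-sunflower is *minimal* if no proper subfamily of it is an odd-sunflower. -/
def IsMinimalOddSunflower [DecidableEq α] (F : Finset (Finset α)) : Prop :=
  IsOddSunflower F ∧ ∀ H ⊂ F, ¬ IsOddSunflower H

/-- `Cfam n` is the family of all `(n-1)`-element subsets of `{1, …, n}`. -/
def Cfam (n : ℕ) : Finset (Finset ℕ) := (Finset.Icc 1 n).powersetCard (n - 1)

/-- `CfamPlus n` is `Cfam n` together with the full set `{1, …, n}`. -/
def CfamPlus (n : ℕ) : Finset (Finset ℕ) := insert (Finset.Icc 1 n) (Cfam n)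

/-- A multifamily (multiset) of at least two nonempty finite sets is an *odd-sunflower* if
every element of the union of its members has odd degree (counted with multiplicity). -/
def MultiOddSunflower [DecidableEq α] (H : Multiset (Finset α)) : Prop :=
  2 ≤ Multiset.card H ∧ (∀ S ∈ H, S.Nonempty) ∧
    ∀ x ∈ H.sup, Odd (H.countP (fun S => x ∈ S))

/-- The wreath product of two families. -/
def Wreath {β : Type*} [DecidableEq α] [DecidableEq β]
    (F : Set (Finset α)) (G : Set (Finset β)) : Set (Finset (α × β)) :=
  {S | ∃ F₀ ∈ F, ∃ g : α → Finset β, (∀ i ∈ F₀, g i ∈ G) ∧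
    S = F₀.biUnion (fun i => ({i} : Finset α) ×ˢ g i)}

/-- Odd-sunflower-freeness for set-indexed families. -/
def OddSunflowerFreeS [DecidableEq α] (F : Set (Finset α)) : Prop :=
  ∀ H : Finset (Finset α), ↑H ⊆ F → ¬ IsOddSunflower H

/-- Antichain condition for set-indexed families. -/
def IsAntichainFamilyS (F : Set (Finset α)) : Prop :=
  ∀ S ∈ F, ∀ T ∈ F, S ⊆ T → S = T

/-!
Let `H` be an odd-sunflower in the wreath product of `F` and `G` and fix a point `a` of the
first factor. The fibres over `a` of the members of `H` projecting onto a set containing `a`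
form a family of members of `G` in which every point has odd degree; the members of `G` occurring
an odd number of times would be an odd-sunflower of `G` unless there is only one, and then the
antichain property makes all these fibres equal, with an odd number of members of `H` over `a`.
So a member of `H` is determined by its projection, and the projections form an odd-sunflower
of `F`. The wreath product has `∑ S ∈ F, |G| ^ |S|` members and is moved into `[1, n * m]` by
numbering the grid `[1, n] × [1, m]`. For the second part, `F` is the family of
`(n - 1)`-subsets of `[1, n]`.
-/

open Finset

section Image

variable {α β : Type*} [DecidableEq β] {φ : α → β} {U : Set α}

lemma injOn_image_finset (hφ : Set.InjOn φ U) :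
    Set.InjOn (Finset.image φ) {S : Finset α | ↑S ⊆ U} := fun S hS T hT h => by
  rw [← coe_inj, ← hφ.image_eq_image_iff hS hT, ← coe_image, ← coe_image, h]

lemma IsAntichainFamily.image {F : Finset (Finset α)} (hφ : Set.InjOn φ U)
    (hFU : ∀ S ∈ F, ↑S ⊆ U) (hF : IsAntichainFamily F) :
    IsAntichainFamily (F.image (Finset.image φ)) := by
  simp only [IsAntichainFamily, forall_mem_image]
  intro S hS T hT hST
  rw [← coe_subset, coe_image, coe_image, hφ.image_subset_image_iff (hFU S hS) (hFU T hT)] at hST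
  rw [hF S hS T hT (coe_subset.1 hST)]

lemma IsOddSunflower.of_image [DecidableEq α] {H : Finset (Finset α)} (hφ : Set.InjOn φ U)
    (hHU : ∀ S ∈ H, ↑S ⊆ U) (h : IsOddSunflower (H.image (Finset.image φ))) :
    IsOddSunflower H := by
  obtain ⟨hcard, hne, hodd⟩ := h
  have hinj : Set.InjOn (Finset.image φ) H := (injOn_image_finset hφ).mono hHU
  refine ⟨by rwa [card_image_of_injOn hinj] at hcard,
    fun S hS => image_nonempty.1 (hne _ (mem_image_of_mem _ hS)), fun x hx => ?_⟩
  obtain ⟨S, hS, hxS⟩ := mem_sup.1 hx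
  have hxU : x ∈ U := hHU S hS hxS
  have hdeg : {T ∈ H | φ x ∈ T.image φ} = {T ∈ H | x ∈ T} := filter_congr fun T hT => by
    rw [← mem_coe, coe_image, hφ.mem_image_iff (hHU T hT) hxU, mem_coe]
  have := hodd (φ x) (mem_sup.2 ⟨_, mem_image_of_mem _ hS, mem_image_of_mem φ hxS⟩)
  rwa [filter_image, card_image_of_injOn (hinj.mono (filter_subset _ _)), hdeg] at this

lemma OddSunflowerFree.image [DecidableEq α] {F : Finset (Finset α)} (hφ : Set.InjOn φ U)
    (hFU : ∀ S ∈ F, ↑S ⊆ U) (hF : OddSunflowerFree F) :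
    OddSunflowerFree (F.image (Finset.image φ)) := by
  intro H hH hHodd
  obtain ⟨H', hH'F, rfl⟩ := subset_image_iff.1 hH
  exact hF H' hH'F (hHodd.of_image hφ fun S hS => hFU S (hH'F hS))

end Image

section Wreath

variable {α β : Type*}

noncomputable def fiber (X : Finset (α × β)) (a : α) : Finset β :=
  X.preimage (Prod.mk a) (Prod.mk_right_injective a).injOn

@[simp]
lemma mem_fiber {X : Finset (α × β)} {a : α} {b : β} : b ∈ fiber X a ↔ (a, b) ∈ X :=
  mem_preimage

variable [DecidableEq α]

lemma mem_iff_mem_image_fst_and_mem_fiber {X : Finset (α × β)} {a : α} {b : β} :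
    (a, b) ∈ X ↔ a ∈ X.image Prod.fst ∧ b ∈ fiber X a :=
  ⟨fun h => ⟨mem_image_of_mem _ h, mem_fiber.2 h⟩, fun h => mem_fiber.1 h.2⟩

lemma fiber_nonempty {X : Finset (α × β)} {a : α} (ha : a ∈ X.image Prod.fst) :
    (fiber X a).Nonempty := by
  obtain ⟨p, hp, rfl⟩ := mem_image.1 ha
  exact ⟨p.2, mem_fiber.2 hp⟩

lemma eq_of_image_fst_eq_of_fiber_eq {X Y : Finset (α × β)}
    (h : X.image Prod.fst = Y.image Prod.fst)
    (hfib : ∀ a ∈ X.image Prod.fst, fiber X a = fiber Y a) : X = Y := by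
  ext ⟨a, b⟩
  rw [mem_iff_mem_image_fst_and_mem_fiber, mem_iff_mem_image_fst_and_mem_fiber, ← h]
  exact and_congr_right fun ha => by rw [hfib a ha]

variable [DecidableEq β] {F : Finset (Finset α)} {G : Finset (Finset β)}

/-- A finset form of `Wreath`, described by projection and fibres rather than by a choice of
`g`; the ambient `F.sup id ×ˢ G.sup id` only serves to make it finite (see `mem_wreath`). -/
noncomputable def wreath (F : Finset (Finset α)) (G : Finset (Finset β)) :
    Finset (Finset (α × β)) :=
  ((F.sup id) ×ˢ (G.sup id)).powerset.filter fun X =>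
    X.image Prod.fst ∈ F ∧ ∀ a ∈ X.image Prod.fst, fiber X a ∈ G

lemma mem_wreath {X : Finset (α × β)} :
    X ∈ wreath F G ↔ X.image Prod.fst ∈ F ∧ ∀ a ∈ X.image Prod.fst, fiber X a ∈ G := by
  refine mem_filter.trans <|
    and_iff_right_of_imp fun ⟨hF, hG⟩ => mem_powerset.2 fun p hp => ?_
  exact mem_product.2 ⟨mem_sup.2 ⟨_, hF, mem_image_of_mem _ hp⟩,
    mem_sup.2 ⟨_, hG _ (mem_image_of_mem _ hp), mem_fiber.2 hp⟩⟩

lemma subset_product_of_mem_wreath {A : Finset α} {B : Finset β} (hF : ∀ S ∈ F, S ⊆ A)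
    (hG : ∀ T ∈ G, T ⊆ B) {X : Finset (α × β)} (hX : X ∈ wreath F G) :
    X ⊆ A ×ˢ B := by
  intro p hp
  have hp1 : p.1 ∈ X.image Prod.fst := mem_image_of_mem _ hp
  exact mem_product.2 ⟨hF _ (mem_wreath.1 hX).1 hp1,
    hG _ ((mem_wreath.1 hX).2 _ hp1) (mem_fiber.2 hp)⟩

lemma nonempty_of_mem_wreath (hF : ∀ S ∈ F, S.Nonempty) {X : Finset (α × β)}
    (hX : X ∈ wreath F G) : X.Nonempty :=
  image_nonempty.1 (hF _ (mem_wreath.1 hX).1)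

lemma isAntichainFamily_wreath (hF : IsAntichainFamily F) (hG : IsAntichainFamily G) :
    IsAntichainFamily (wreath F G) := by
  intro X hX Y hY hXY
  obtain ⟨hXF, hXG⟩ := mem_wreath.1 hX
  obtain ⟨hYF, hYG⟩ := mem_wreath.1 hY
  have hbase := hF _ hXF _ hYF (image_subset_image hXY)
  refine eq_of_image_fst_eq_of_fiber_eq hbase fun a ha => ?_
  exact hG _ (hXG a ha) _ (hYG a (hbase ▸ ha)) fun b hb => mem_fiber.2 (hXY (mem_fiber.1 hb))

def ofFibers (S : Finset α) (g : (a : α) → a ∈ S → Finset β) : Finset (α × β) :=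
  S.attach.biUnion fun a => {a.1} ×ˢ g a.1 a.2

lemma mem_ofFibers {S : Finset α} {g : (a : α) → a ∈ S → Finset β} {p : α × β} :
    p ∈ ofFibers S g ↔ ∃ h : p.1 ∈ S, p.2 ∈ g p.1 h := by
  obtain ⟨a, b⟩ := p
  simp [ofFibers]

lemma image_fst_ofFibers {S : Finset α} {g : (a : α) → a ∈ S → Finset β}
    (hg : ∀ a h, (g a h).Nonempty) : (ofFibers S g).image Prod.fst = S := by
  ext a
  refine ⟨fun ha => ?_, fun ha => ?_⟩
  · obtain ⟨p, hp, rfl⟩ := mem_image.1 ha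
    exact (mem_ofFibers.1 hp).1
  · obtain ⟨b, hb⟩ := hg a ha
    exact mem_image_of_mem Prod.fst (mem_ofFibers.2 ⟨ha, hb⟩ : (a, b) ∈ ofFibers S g)

lemma fiber_ofFibers {S : Finset α} {g : (a : α) → a ∈ S → Finset β} {a : α}
    (ha : a ∈ S) :
    fiber (ofFibers S g) a = g a ha := by
  ext b
  simp [mem_ofFibers, ha]

lemma card_filter_image_fst_wreath (hG : ∀ T ∈ G, T.Nonempty) {S : Finset α} (hS : S ∈ F) :
    #{X ∈ wreath F G | X.image Prod.fst = S} = #G ^ #S := by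
  rw [← prod_const, ← card_pi]
  refine (card_bij (fun g _ => ofFibers S g) (fun g hg => ?_) (fun g _ g' _ h => ?_)
    (fun X hX => ?_)).symm
  · have hgG : ∀ a h, g a h ∈ G := fun a h => mem_pi.1 hg a h
    have hbase : (ofFibers S g).image Prod.fst = S := image_fst_ofFibers fun a h => hG _ (hgG a h)
    refine mem_filter.2 ⟨mem_wreath.2 ⟨hbase.symm ▸ hS, fun a ha => ?_⟩, hbase⟩
    rw [hbase] at ha
    rw [fiber_ofFibers ha]
    exact hgG a ha
  · funext a ha
    rw [← fiber_ofFibers (g := g) ha, ← fiber_ofFibers (g := g') ha, h]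
  · obtain ⟨hX, hXS⟩ := mem_filter.1 hX
    have hfibG : ∀ a ∈ S, fiber X a ∈ G := fun a ha => (mem_wreath.1 hX).2 a (hXS ▸ ha)
    refine ⟨fun a _ => fiber X a, mem_pi.2 hfibG, ?_⟩
    have hofFibers : (ofFibers S fun a _ => fiber X a).image Prod.fst = S :=
      image_fst_ofFibers fun a ha => fiber_nonempty (hXS.symm ▸ ha)
    refine eq_of_image_fst_eq_of_fiber_eq (hofFibers.trans hXS.symm) fun a ha => ?_
    exact fiber_ofFibers (hofFibers ▸ ha)

lemma card_wreath (hG : ∀ T ∈ G, T.Nonempty) : #(wreath F G) = ∑ S ∈ F, #G ^ #S := by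
  rw [card_eq_sum_card_fiberwise fun X hX => (mem_wreath.1 hX).1]
  exact sum_congr rfl fun S hS => card_filter_image_fst_wreath hG hS

end Wreath

section OddSunflowerFree

variable {α β : Type*} [DecidableEq α] [DecidableEq β]

/-- Otherwise the members occurring an odd number of times in the family form an odd-sunflower
of `G`. -/
lemma OddSunflowerFree.eq_of_odd_degree {G : Finset (Finset β)} (hG : OddSunflowerFree G)
    (hGa : IsAntichainFamily G) {ι : Type*} {I : Finset ι} {s : ι → Finset β}
    (hsG : ∀ k ∈ I, s k ∈ G) (hs : ∀ k ∈ I, (s k).Nonempty)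
    (hodd : ∀ k ∈ I, ∀ b ∈ s k, Odd #{l ∈ I | b ∈ s l}) :
    ∀ k ∈ I, ∀ l ∈ I, s k = s l := by
  set O := (I.image s).filter fun T => Odd #{k ∈ I | s k = T}
  have hOsub : O ⊆ G := fun T hT => by
    obtain ⟨k, hk, rfl⟩ := mem_image.1 (mem_filter.1 hT).1
    exact hsG k hk
  have hOdeg : ∀ k ∈ I, ∀ b ∈ s k, Odd #{T ∈ O | b ∈ T} := by
    intro k hk b hb
    have hsum :
        #{l ∈ I | b ∈ s l} = ∑ T ∈ I.image s with b ∈ T, #{l ∈ I | s l = T} := by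
      rw [card_eq_sum_card_image s, filter_image]
      refine sum_congr rfl fun T hT => ?_
      obtain ⟨l, hl, rfl⟩ := mem_image.1 hT
      rw [filter_filter]
      exact congrArg card <| filter_congr fun l' _ =>
        and_iff_right_of_imp fun h => h ▸ (mem_filter.1 hl).2
    have := hodd k hk b hb
    rwa [hsum, odd_sum_iff_odd_card_odd, filter_comm] at this
  have hOmem : ∀ k ∈ I, ∀ b ∈ s k, ∃ T ∈ O, b ∈ T := fun k hk b hb => by
    obtain ⟨T, hT⟩ := card_pos.1 (hOdeg k hk b hb).pos
    exact ⟨T, (mem_filter.1 hT).1, (mem_filter.1 hT).2⟩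
  have hOsingle : ∀ T ∈ O, ∀ T' ∈ O, T = T' := by
    refine card_le_one.1 (not_lt.1 fun h2 => hG O hOsub ⟨h2, fun T hT => ?_, fun b hb => ?_⟩)
    · obtain ⟨k, hk, rfl⟩ := mem_image.1 (mem_filter.1 hT).1
      exact hs k hk
    · obtain ⟨T, hT, hbT⟩ := mem_sup.1 hb
      obtain ⟨k, hk, rfl⟩ := mem_image.1 (mem_filter.1 hT).1
      exact hOdeg k hk b hbT
  have hsO : ∀ k ∈ I, s k ∈ O := by
    intro k hk
    obtain ⟨b, hb⟩ := hs k hk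
    obtain ⟨T, hT, -⟩ := hOmem k hk b hb
    have hsub : s k ⊆ T := fun b' hb' => by
      obtain ⟨T', hT', hb'T'⟩ := hOmem k hk b' hb'
      rwa [hOsingle T hT T' hT']
    rwa [hGa _ (hsG k hk) _ (hOsub hT) hsub]
  exact fun k hk l hl => hOsingle _ (hsO k hk) _ (hsO l hl)

theorem oddSunflowerFree_wreath {F : Finset (Finset α)} {G : Finset (Finset β)}
    (hF : OddSunflowerFree F) (hG : OddSunflowerFree G) (hGa : IsAntichainFamily G) :
    OddSunflowerFree (wreath F G) := by
  rintro H hH ⟨hcard, hne, hodd⟩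
  have hdeg : ∀ a b, #{X ∈ H | (a, b) ∈ X} =
      #{X ∈ {X ∈ H | a ∈ X.image Prod.fst} | b ∈ fiber X a} := by
    intro a b
    simp_rw [filter_filter, ← mem_iff_mem_image_fst_and_mem_fiber]
  have hconst : ∀ a, ∀ X ∈ {X ∈ H | a ∈ X.image Prod.fst},
      ∀ Y ∈ {X ∈ H | a ∈ X.image Prod.fst}, fiber X a = fiber Y a := by
    intro a
    refine hG.eq_of_odd_degree hGa (fun X hX => ?_) (fun X hX => fiber_nonempty (mem_filter.1 hX).2)
      fun X hX b hb => ?_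
    · exact (mem_wreath.1 (hH (mem_filter.1 hX).1)).2 a (mem_filter.1 hX).2
    · rw [← hdeg]
      exact hodd _ (mem_sup.2 ⟨X, (mem_filter.1 hX).1, mem_fiber.1 hb⟩)
  have hinj : Set.InjOn (image Prod.fst) H := fun X hX Y hY h =>
    eq_of_image_fst_eq_of_fiber_eq h fun a ha =>
      hconst a X (mem_filter.2 ⟨hX, ha⟩) Y (mem_filter.2 ⟨hY, h ▸ ha⟩)
  refine hF (H.image (image Prod.fst)) (image_subset_iff.2 fun X hX => (mem_wreath.1 (hH hX)).1)
    ⟨by rwa [card_image_of_injOn hinj],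
      forall_mem_image.2 fun X hX => image_nonempty.2 (hne X hX),
      fun a ha => ?_⟩
  obtain ⟨_, hX', haX⟩ := mem_sup.1 ha
  obtain ⟨X, hX, rfl⟩ := mem_image.1 hX'
  obtain ⟨b, hb⟩ := fiber_nonempty haX
  have hall : {Y ∈ {X ∈ H | a ∈ X.image Prod.fst} | b ∈ fiber Y a} =
      {X ∈ H | a ∈ X.image Prod.fst} :=
    filter_true_of_mem fun Y hY => hconst a Y hY X (mem_filter.2 ⟨hX, haX⟩) ▸ hb
  rw [filter_image, card_image_of_injOn (hinj.mono (filter_subset _ _)), ← hall, ← hdeg]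
  exact hodd (a, b) (mem_sup.2 ⟨X, hX, mem_fiber.1 hb⟩)

end OddSunflowerFree

section CoSingletons

variable {α : Type*} [DecidableEq α]

lemma powersetCard_card_sub_one {U : Finset α} (hU : U.Nonempty) :
    U.powersetCard (#U - 1) = U.image U.erase := by
  ext S
  simp only [mem_powersetCard, mem_image]
  refine ⟨fun ⟨hSU, hcard⟩ => ?_, ?_⟩
  · have hlt : #S < #U := by have := hU.card_pos; omega
    obtain ⟨a, haU, haS⟩ := exists_mem_notMem_of_card_lt_card hlt
    refine ⟨a, haU, (eq_of_subset_of_card_le (subset_erase.2 ⟨hSU, haS⟩) ?_).symm⟩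
    rw [card_erase_of_mem haU, hcard]
  · rintro ⟨a, ha, rfl⟩
    exact ⟨erase_subset a U, card_erase_of_mem ha⟩

/-- In the family `J.image U.erase` a point `x ∈ U` has degree `#J - 1` if `x ∈ J` and `#J`
otherwise; these have different parities, and `J = U` is excluded as `#U` is odd. -/
lemma oddSunflowerFree_image_erase {U : Finset α} (hU : Odd #U) :
    OddSunflowerFree (U.image U.erase) := by
  rintro H hH ⟨hcard, -, hodd⟩
  obtain ⟨J, hJU, rfl⟩ := subset_image_iff.1 hH
  have hinj : Set.InjOn U.erase J := U.erase_injOn.mono hJU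
  rw [card_image_of_injOn hinj] at hcard
  have hdeg : ∀ x ∈ U, Odd #(J.erase x) := by
    intro x hx
    obtain ⟨j, hj, hjx⟩ := exists_mem_ne hcard x
    have hxj : x ∈ U.erase j := mem_erase.2 ⟨hjx.symm, hx⟩
    have := hodd x (mem_sup.2 ⟨U.erase j, mem_image_of_mem _ hj, hxj⟩)
    rwa [filter_image, card_image_of_injOn (hinj.mono (filter_subset _ _)),
      filter_congr fun j _ => by rw [mem_erase, and_iff_left hx, ne_comm], filter_ne'] at this
  obtain ⟨j, hj⟩ := card_pos.1 (by omega : 0 < #J)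
  have hJeven : Even #J := by
    have := hdeg j (hJU hj)
    rw [card_erase_of_mem hj] at this
    obtain ⟨c, hc⟩ := this
    exact ⟨c + 1, by omega⟩
  have hJU' : J ⊂ U :=
    Finset.ssubset_iff_subset_ne.2 ⟨hJU, fun h => Nat.not_even_iff_odd.2 hU (h ▸ hJeven)⟩
  obtain ⟨y, hyU, hyJ⟩ := exists_of_ssubset hJU'
  have := hdeg y hyU
  rw [erase_eq_of_notMem hyJ] at this
  exact Nat.not_even_iff_odd.2 this hJeven

end CoSingletons

lemma isAntichainFamily_powersetCard {α : Type*} (U : Finset α) (k : ℕ) :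
    IsAntichainFamily (U.powersetCard k) := fun _ hS _ hT hST =>
  eq_of_subset_of_card_le hST ((mem_powersetCard.1 hT).2.trans (mem_powersetCard.1 hS).2.symm).le

lemma Cfam_eq_image_erase {n : ℕ} (hn : 1 ≤ n) : Cfam n = (Icc 1 n).image (Icc 1 n).erase := by
  rw [← powersetCard_card_sub_one (nonempty_Icc.2 hn), Nat.card_Icc, Nat.add_sub_cancel, Cfam]

lemma card_Cfam {n : ℕ} (hn : 1 ≤ n) : #(Cfam n) = n := by
  rw [Cfam_eq_image_erase hn, card_image_of_injOn (erase_injOn _), Nat.card_Icc, Nat.add_sub_cancel]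

lemma oddSunflowerFree_Cfam {n : ℕ} (hn : Odd n) : OddSunflowerFree (Cfam n) := by
  rw [Cfam_eq_image_erase hn.pos]
  exact oddSunflowerFree_image_erase (by rwa [Nat.card_Icc, Nat.add_sub_cancel])

lemma isAntichainFamily_Cfam (n : ℕ) : IsAntichainFamily (Cfam n) :=
  isAntichainFamily_powersetCard _ _

/-- Row-major numbering of the grid `[1, n] × [1, m]` by `[1, n * m]`. -/
def pairCode (m : ℕ) (p : ℕ × ℕ) : ℕ := (p.1 - 1) * m + p.2

lemma injOn_pairCode (n m : ℕ) : Set.InjOn (pairCode m) ↑(Icc 1 n ×ˢ Icc 1 m) := by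
  rintro ⟨i, j⟩ hp ⟨i', j'⟩ hp' h
  simp only [coe_product, coe_Icc, Set.mem_prod, Set.mem_Icc] at hp hp'
  obtain ⟨a, rfl⟩ : ∃ a, i = a + 1 := ⟨i - 1, by omega⟩
  obtain ⟨a', rfl⟩ : ∃ a', i' = a' + 1 := ⟨i' - 1, by omega⟩
  simp only [pairCode, Nat.add_sub_cancel] at h
  rcases lt_trichotomy a a' with h1 | rfl | h1
  · nlinarith
  · simp only [Prod.mk.injEq, true_and]; omega
  · nlinarith

lemma pairCode_mem_Icc {n m : ℕ} {p : ℕ × ℕ} (hp : p ∈ Icc 1 n ×ˢ Icc 1 m) :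
    pairCode m p ∈ Icc 1 (n * m) := by
  simp only [mem_product, mem_Icc] at hp
  simp only [pairCode, mem_Icc]
  have : (p.1 - 1) * m + m ≤ n * m := by
    rw [← Nat.succ_mul]; exact Nat.mul_le_mul_right m (by omega)
  omega

theorem exists_oddSunflowerFree_antichain_card_eq_mul_pow {n m k : ℕ}
    {F G : Finset (Finset ℕ)} (hF : ∀ S ∈ F, S.Nonempty ∧ S.card = k ∧ S ⊆ Icc 1 n)
    (hFa : IsAntichainFamily F) (hFo : OddSunflowerFree F)
    (hG : ∀ T ∈ G, T.Nonempty ∧ T ⊆ Icc 1 m) (hGa : IsAntichainFamily G)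
    (hGo : OddSunflowerFree G) :
    ∃ K : Finset (Finset ℕ), (∀ S ∈ K, S.Nonempty ∧ S ⊆ Icc 1 (n * m)) ∧
      IsAntichainFamily K ∧ OddSunflowerFree K ∧ K.card = F.card * G.card ^ k := by
  have hWU : ∀ X ∈ wreath F G, (X : Set (ℕ × ℕ)) ⊆ ↑(Icc 1 n ×ˢ Icc 1 m) := fun X hX =>
    coe_subset.2 <| subset_product_of_mem_wreath (fun S hS => (hF S hS).2.2)
      (fun T hT => (hG T hT).2) hX
  have hφ := injOn_pairCode n m
  refine ⟨(wreath F G).image (image (pairCode m)),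
    forall_mem_image.2 fun X hX => ⟨?_, ?_⟩,
    (isAntichainFamily_wreath hFa hGa).image hφ hWU,
    (oddSunflowerFree_wreath hFo hGo hGa).image hφ hWU, ?_⟩
  · exact image_nonempty.2 (nonempty_of_mem_wreath (fun S hS => (hF S hS).1) hX)
  · exact image_subset_iff.2 fun p hp => pairCode_mem_Icc (hWU X hX hp)
  · rw [card_image_of_injOn ((injOn_image_finset hφ).mono hWU),
      card_wreath fun T hT => (hG T hT).1,
      sum_congr rfl fun S hS => by rw [(hF S hS).2.1], sum_const, smul_eq_mul]

/-- Corollary of Lemma 6: from a `k`-uniform odd-sunflower-free antichain `F` of (nonempty)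
subsets of an `n`-element set and an odd-sunflower-free antichain of `b` nonempty subsets
of an `m`-element set, one obtains an odd-sunflower-free antichain of `|F| · b^k` nonempty
subsets of an `(n·m)`-element set.  In particular, for every odd `n ≥ 3` one obtains one
with `n · b^(n-1)` members. -/
theorem wreath_corollary :
    (∀ (n m k b : ℕ) (F : Finset (Finset ℕ)),
      (∀ S ∈ F, S.Nonempty ∧ S.card = k ∧ S ⊆ Finset.Icc 1 n) →
      IsAntichainFamily F → OddSunflowerFree F →
      (∃ G : Finset (Finset ℕ), (∀ S ∈ G, S.Nonempty ∧ S ⊆ Finset.Icc 1 m) ∧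
        IsAntichainFamily G ∧ OddSunflowerFree G ∧ G.card = b) →
      ∃ K : Finset (Finset ℕ), (∀ S ∈ K, S.Nonempty ∧ S ⊆ Finset.Icc 1 (n * m)) ∧
        IsAntichainFamily K ∧ OddSunflowerFree K ∧ K.card = F.card * b ^ k) ∧
    (∀ n m b : ℕ, Odd n → 3 ≤ n →
      (∃ G : Finset (Finset ℕ), (∀ S ∈ G, S.Nonempty ∧ S ⊆ Finset.Icc 1 m) ∧
        IsAntichainFamily G ∧ OddSunflowerFree G ∧ G.card = b) →
      ∃ K : Finset (Finset ℕ), (∀ S ∈ K, S.Nonempty ∧ S ⊆ Finset.Icc 1 (n * m)) ∧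
        IsAntichainFamily K ∧ OddSunflowerFree K ∧ K.card = n * b ^ (n - 1)) := by
  refine ⟨fun n m k b F hF hFa hFo ⟨G, hG, hGa, hGo, hb⟩ =>
    hb ▸ exists_oddSunflowerFree_antichain_card_eq_mul_pow hF hFa hFo hG hGa hGo, ?_⟩
  rintro n m b hn hn3 ⟨G, hG, hGa, hGo, rfl⟩
  have hC : ∀ S ∈ Cfam n, S.Nonempty ∧ S.card = n - 1 ∧ S ⊆ Icc 1 n := fun S hS => by
    obtain ⟨hSU, hcard⟩ := mem_powersetCard.1 hS
    exact ⟨card_pos.1 (by omega), hcard, hSU⟩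
  simpa only [card_Cfam hn.pos] using exists_oddSunflowerFree_antichain_card_eq_mul_pow hC
    (isAntichainFamily_Cfam n) (oddSunflowerFree_Cfam hn) hG hGa hGo
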